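/- Let K be a nilpotent group of class three, let y₁, …, y_m be elements of K which generate K modulo Z(K), and assume that y_i^(2^(r_i)) ∈ Z(K) for each i, where 1 ≤ r₁ ≤ ⋯ ≤ r_(m-1) ≤ r_m. If there exist integers γ_i with 0 ≤ γ_i < r_(m-1) for i = 1, …, m-1 such that [y_m, y_i]^(2^(γ_i)) commutes with both y_i and y_m, then y_m^(2^(r_(m-1))) ∈ Z(K). -/

import Mathlib

/-- The paper's commutator convention: `[x,y] = x⁻¹y⁻¹xy`. -/
def pcomm {G : Type*} [Group G] (x y : G) : G := x⁻¹ * y⁻¹ * x * y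

/-!
Write `a = y_m` and `ρ = r_{m-1}`. Since the `y_i` generate `K` modulo its centre, it suffices that
`a ^ 2 ^ ρ` commutes with every `b = y_i`. In class three every `[[x, y], z]` is central, so
`[a ^ n, b] = [a, b] ^ n * [[a, b], a] ^ (n choose 2)`. Applied to `[b ^ 2 ^ r_i, a] = 1`, this makes
`[a, b] ^ 2 ^ r_i` a power of `[[b, a], b]`, whose order divides `2 ^ γ_i` because `[a, b] ^ 2 ^ γ_i`
commutes with `b`; since `2 ^ γ_i ∣ 2 ^ (ρ - 1) ∣ (2 ^ r_i choose 2) * 2 ^ (ρ - r_i)`, we get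
`[a, b] ^ 2 ^ ρ = 1`. Likewise `[[a, b], a] ^ 2 ^ γ_i = 1` and `2 ^ γ_i ∣ (2 ^ ρ choose 2)`, so the
expansion of `[a ^ 2 ^ ρ, b]` collapses to `1`.
-/

open Subgroup
open scoped commutatorElement

theorem pow_eq_one_of_pow_eq_one_of_dvd {M : Type*} [Monoid M] {x : M} {k n : ℕ}
    (hx : x ^ k = 1) (hkn : k ∣ n) : x ^ n = 1 := by
  obtain ⟨l, rfl⟩ := hkn
  rw [pow_mul, hx, one_pow]

theorem two_pow_pred_dvd_choose_two_mul {s t : ℕ} (hst : s ≤ t) :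
    2 ^ (t - 1) ∣ (2 ^ s).choose 2 * 2 ^ (t - s) := by
  rcases s with _ | s
  · simp
  obtain ⟨k, rfl⟩ : ∃ k, t = s + 1 + k := ⟨t - (s + 1), by omega⟩
  have hchoose : (2 ^ (s + 1)).choose 2 = 2 ^ s * (2 ^ (s + 1) - 1) := by
    rw [Nat.choose_two_right, pow_succ, mul_comm (2 ^ s) 2, mul_assoc,
      Nat.mul_div_cancel_left _ two_pos]
  rw [hchoose, Nat.add_sub_cancel_left, show s + 1 + k - 1 = s + k by omega, pow_add]
  exact Dvd.intro (2 ^ (s + 1) - 1) (by ring)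

section Commutators

variable {G : Type*} [Group G]

theorem pcomm_eq_one_iff {x y : G} : pcomm x y = 1 ↔ Commute x y := by
  rw [pcomm, mul_assoc, mul_assoc, inv_mul_eq_one, eq_inv_mul_iff_mul_eq, commute_iff_eq, eq_comm]

theorem pcomm_swap (x y : G) : pcomm y x = (pcomm x y)⁻¹ := by
  simp only [pcomm]; group

theorem pow_mul_eq_mul_pow_mul_pcomm_pow {c x : G} (h : Commute (pcomm c x) c) (n : ℕ) :
    c ^ n * x = x * c ^ n * pcomm c x ^ n := by
  have hconj : x⁻¹ * c * x = c * pcomm c x := by simp only [pcomm]; group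
  induction n with
  | zero => simp
  | succ n ih =>
    calc c ^ (n + 1) * x = c ^ n * x * (x⁻¹ * c * x) := by group
      _ = x * c ^ n * (pcomm c x ^ n * c) * pcomm c x := by rw [ih, hconj]; group
      _ = x * c ^ (n + 1) * pcomm c x ^ (n + 1) := by rw [(h.pow_left n).eq]; group

theorem pcomm_pow_left_of_commute {c x : G} (h : Commute (pcomm c x) c) (n : ℕ) :
    pcomm (c ^ n) x = pcomm c x ^ n := by
  rw [pcomm, mul_assoc, pow_mul_eq_mul_pow_mul_pcomm_pow h]
  group

theorem mul_pow_eq_pow_mul_pow_mul_pcomm_pow {a c : G} (ha : Commute (pcomm c a) a)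
    (hc : Commute (pcomm c a) c) (n : ℕ) :
    (a * c) ^ n = a ^ n * c ^ n * pcomm c a ^ n.choose 2 := by
  induction n with
  | zero => simp
  | succ n ih =>
    calc (a * c) ^ (n + 1) = a ^ n * c ^ n * (pcomm c a ^ n.choose 2 * a) * c := by
          rw [pow_succ, ih]; group
      _ = a ^ n * (c ^ n * a) * (pcomm c a ^ n.choose 2 * c) := by
          rw [(ha.pow_left _).eq]; group
      _ = a ^ (n + 1) * c ^ n * (pcomm c a ^ n * c) * pcomm c a ^ n.choose 2 := by
          rw [pow_mul_eq_mul_pow_mul_pcomm_pow hc, ((hc.pow_left _).eq)]; group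
      _ = a ^ (n + 1) * c ^ (n + 1) * pcomm c a ^ (n + 1).choose 2 := by
          rw [(hc.pow_left n).eq, Nat.choose_succ_succ, Nat.choose_one_right]; group

theorem pcomm_pow_left {a b : G} (ha : Commute (pcomm (pcomm a b) a) a)
    (hc : Commute (pcomm (pcomm a b) a) (pcomm a b)) (n : ℕ) :
    pcomm (a ^ n) b = pcomm a b ^ n * pcomm (pcomm a b) a ^ n.choose 2 := by
  have hconj : b⁻¹ * a ^ n * b = (a * pcomm a b) ^ n := by
    have h := conj_pow (a := b⁻¹) (b := a) (i := n)
    rw [inv_inv] at h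
    rw [← h]; simp only [pcomm]; group
  calc pcomm (a ^ n) b = (a ^ n)⁻¹ * (b⁻¹ * a ^ n * b) := by simp only [pcomm]; group
    _ = _ := by rw [hconj, mul_pow_eq_pow_mul_pow_mul_pcomm_pow ha hc]; group

theorem pcomm_eq_commutatorElement (x y : G) : pcomm x y = ⁅x⁻¹, y⁻¹⁆ := by
  simp only [pcomm, commutatorElement_def, inv_inv]

theorem pcomm_mem_lowerCentralSeries_succ {n : ℕ} {x : G}
    (hx : x ∈ (⊤ : Subgroup G).lowerCentralSeries n) (y : G) :
    pcomm x y ∈ (⊤ : Subgroup G).lowerCentralSeries (n + 1) := by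
  rw [pcomm_eq_commutatorElement]
  exact commutator_mem_commutator (inv_mem hx) (mem_top _)

theorem mem_center_of_mem_lowerCentralSeries {n : ℕ}
    (h : (⊤ : Subgroup G).lowerCentralSeries (n + 1) = ⊥) {x : G}
    (hx : x ∈ (⊤ : Subgroup G).lowerCentralSeries n) : x ∈ center G := by
  rw [mem_center_iff]
  intro g
  have hxg : ⁅x, g⁆ ∈ (⊤ : Subgroup G).lowerCentralSeries (n + 1) :=
    commutator_mem_commutator hx (mem_top g)
  rw [h, mem_bot, commutatorElement_eq_one_iff_commute] at hxg
  exact hxg.eq.symm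

theorem pcomm_pcomm_mem_center (h : (⊤ : Subgroup G).lowerCentralSeries 3 = ⊥) (x y z : G) :
    pcomm (pcomm x y) z ∈ center G :=
  mem_center_of_mem_lowerCentralSeries h <|
    pcomm_mem_lowerCentralSeries_succ (pcomm_mem_lowerCentralSeries_succ (mem_top x) y) z

theorem mem_center_of_forall_commute {ι : Type*} (y : ι → G)
    (hgen : closure (Set.range fun i => (QuotientGroup.mk (y i) : G ⧸ center G)) = ⊤)
    {z : G} (hz : ∀ i, Commute z (y i)) : z ∈ center G := by
  have hker : (QuotientGroup.mk' (center G)).ker ≤ centralizer {z} := by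
    rw [QuotientGroup.ker_mk']
    exact center_le_centralizer _
  have hmap : (centralizer {z}).map (QuotientGroup.mk' (center G)) = ⊤ := by
    rw [eq_top_iff, ← hgen, closure_le]
    rintro _ ⟨i, rfl⟩
    exact ⟨y i, mem_centralizer_singleton_iff.2 (hz i).eq.symm, rfl⟩
  have hC : centralizer {z} = ⊤ := by
    rw [← comap_map_eq_self hker, hmap, comap_top]
  exact Set.singleton_subset_iff.1 (centralizer_eq_top_iff_subset.1 hC)

theorem pcomm_pow_two_pow_eq_one (h3 : ∀ x y z : G, pcomm (pcomm x y) z ∈ center G)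
    {a b : G} {s t γ : ℕ} (hst : s ≤ t) (hγ : γ < t) (hb : Commute (b ^ 2 ^ s) a)
    (hcb : Commute (pcomm a b ^ 2 ^ γ) b) : pcomm a b ^ 2 ^ t = 1 := by
  rw [pcomm_swap b a] at hcb ⊢
  rw [inv_pow] at hcb
  rw [inv_pow, inv_eq_one]
  have hf : pcomm (pcomm b a) b ^ 2 ^ γ = 1 := by
    rw [← pcomm_pow_left_of_commute ((h3 _ _ _).comm _), pcomm_eq_one_iff]
    exact Commute.inv_left_iff.1 hcb
  have hexp : pcomm b a ^ 2 ^ s = (pcomm (pcomm b a) b ^ (2 ^ s).choose 2)⁻¹ := by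
    rw [← mul_eq_one_iff_eq_inv, ← pcomm_pow_left ((h3 _ _ _).comm _) ((h3 _ _ _).comm _),
      pcomm_eq_one_iff]
    exact hb
  calc pcomm b a ^ 2 ^ t = (pcomm b a ^ 2 ^ s) ^ 2 ^ (t - s) := by
        rw [← pow_mul, ← pow_add, Nat.add_sub_cancel' hst]
    _ = (pcomm (pcomm b a) b ^ ((2 ^ s).choose 2 * 2 ^ (t - s)))⁻¹ := by
        rw [hexp, inv_pow, pow_mul]
    _ = 1 := by
        rw [inv_eq_one]
        exact pow_eq_one_of_pow_eq_one_of_dvd hf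
          ((pow_dvd_pow 2 (by omega : γ ≤ t - 1)).trans (two_pow_pred_dvd_choose_two_mul hst))

theorem commute_pow_two_pow (h3 : ∀ x y z : G, pcomm (pcomm x y) z ∈ center G)
    {a b : G} {s t γ : ℕ} (hst : s ≤ t) (hγ : γ < t) (hb : Commute (b ^ 2 ^ s) a)
    (hcb : Commute (pcomm a b ^ 2 ^ γ) b) (hca : Commute (pcomm a b ^ 2 ^ γ) a) :
    Commute (a ^ 2 ^ t) b := by
  have hq : pcomm (pcomm a b) a ^ 2 ^ γ = 1 := by
    rw [← pcomm_pow_left_of_commute ((h3 _ _ _).comm _), pcomm_eq_one_iff]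
    exact hca
  have hqt : pcomm (pcomm a b) a ^ (2 ^ t).choose 2 = 1 :=
    pow_eq_one_of_pow_eq_one_of_dvd hq ((pow_dvd_pow 2 (by omega : γ ≤ t - 1)).trans
      (by simpa using two_pow_pred_dvd_choose_two_mul (le_refl t)))
  rw [← pcomm_eq_one_iff, pcomm_pow_left ((h3 _ _ _).comm _) ((h3 _ _ _).comm _),
    pcomm_pow_two_pow_eq_one h3 hst hγ hb hcb, hqt, one_mul]

end Commutators

/-- Let `K` be a nilpotent group of class three, let `y₁, …, y_m` generate `K`
modulo its center, with `y i ^ (2 ^ r i)` central and `1 ≤ r₁ ≤ ⋯ ≤ r_m`.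
If there are `γ i` with `0 ≤ γ i < r_{m-1}` (for `i = 1, …, m-1`) such that
`[y_m, y_i] ^ (2 ^ γ i)` commutes with `y_i` and with `y_m`, then
`y_m ^ (2 ^ r_{m-1})` is central. -/
theorem central_power_of_commutator_condition {K : Type*} [Group K] {m : ℕ}
    (hm : 1 < m)
    (hclass3 : Subgroup.lowerCentralSeries (⊤ : Subgroup K) 3 = ⊥)
    (y : Fin m → K) (r : Fin m → ℕ)
    (hgen : Subgroup.closure
      (Set.range fun i => (QuotientGroup.mk (y i) : K ⧸ Subgroup.center K)) = ⊤)
    (hmono : Monotone r)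
    (hcent : ∀ i, y i ^ 2 ^ r i ∈ Subgroup.center K)
    (γ : Fin m → ℕ)
    (hγ : ∀ i : Fin m, (i : ℕ) < m - 1 →
      γ i < r ⟨m - 2, by omega⟩ ∧
      Commute (pcomm (y ⟨m - 1, by omega⟩) (y i) ^ 2 ^ γ i) (y i) ∧
      Commute (pcomm (y ⟨m - 1, by omega⟩) (y i) ^ 2 ^ γ i) (y ⟨m - 1, by omega⟩)) :
    y ⟨m - 1, by omega⟩ ^ 2 ^ r ⟨m - 2, by omega⟩ ∈ Subgroup.center K := by
  refine mem_center_of_forall_commute y hgen fun i => ?_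
  by_cases hi : (i : ℕ) < m - 1
  · obtain ⟨hγi, hcb, hca⟩ := hγ i hi
    have hri : r i ≤ r ⟨m - 2, by omega⟩ := hmono (Fin.le_def.2 (by simp only; omega))
    exact commute_pow_two_pow (pcomm_pcomm_mem_center hclass3) hri hγi
      ((hcent i).comm _) hcb hca
  · rw [show i = ⟨m - 1, by omega⟩ from Fin.ext (by simp only; omega)]
    exact (Commute.refl _).pow_left _
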